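/- arXiv:2403.06830 — 4 statements merged into one kernel-verified Lean document; each statement's English description precedes it below -/
import Mathlib

section
/- In the Hopf algebra H = Õ_q(P) (quotient of Õ_q(GL(2)) by (c)), the element β := t^{-1} n is left H_0-coinvariant, where H_0 = H/(n), and the subalgebra of left H_0-coinvariants of H is generated by β. -/
/-!
Since `π n = 0`, the coaction `ρ = (π ⊗ id) ∘ Δ` is an algebra map sending `n` to `π t ⊗ n`,
so every basis vector is an eigenvector: `ρ (D̃^p t^m n^r) = π (D̃^p t^(m+r)) ⊗ D̃^p t^m n^r`.
Reading off coefficients in the tensor basis, `ρ h = 1 ⊗ h` exactly when `h` is supported on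
the vectors with `p = 0`, `m + r = 0`, i.e. on `t^(-r) n^r`, and the `q`-commutation
`n t⁻¹ = q⁻¹ t⁻¹ n` makes `t^(-r) n^r = q^(r choose 2) β^r`.
-/

open TensorProduct

section QCommute

variable {k R : Type*} [CommSemiring k] [Semiring R] [Algebra k R] {c : k} {x y : R}

theorem pow_mul_of_mul_eq_smul (h : x * y = c • (y * x)) (a : ℕ) :
    x ^ a * y = c ^ a • (y * x ^ a) := by
  induction a with
  | zero => simp
  | succ a ih =>
    rw [pow_succ, mul_assoc, h, mul_smul_comm, ← mul_assoc, ih, smul_mul_assoc, smul_smul,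
      mul_assoc, ← pow_succ, ← pow_succ']

theorem mul_pow_of_mul_eq_smul (h : y * x = c • (x * y)) (r : ℕ) :
    (x * y) ^ r = c ^ r.choose 2 • (x ^ r * y ^ r) := by
  induction r with
  | zero => simp
  | succ r ih =>
    have hyx : y ^ r * x = c ^ r • (x * y ^ r) := pow_mul_of_mul_eq_smul h r
    calc (x * y) ^ (r + 1) = c ^ r.choose 2 • (x ^ r * (y ^ r * x) * y) := by
          simp only [pow_succ, ih, smul_mul_assoc, mul_assoc]
      _ = (c ^ r.choose 2 * c ^ r) • (x ^ (r + 1) * y ^ (r + 1)) := by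
          rw [hyx, mul_smul_comm, smul_mul_assoc, smul_smul]
          simp only [pow_succ, mul_assoc]
      _ = c ^ (r + 1).choose 2 • (x ^ (r + 1) * y ^ (r + 1)) := by
          rw [← pow_add, Nat.choose_succ_succ, Nat.choose_one_right, Nat.add_comm]

theorem Units.mul_inv_eq_smul_of_mul_eq_smul (t : Rˣ) (h : (t : R) * x = c • (x * t)) :
    x * ↑t⁻¹ = c • (↑t⁻¹ * x) :=
  calc x * ↑t⁻¹ = ↑t⁻¹ * (t * x) * ↑t⁻¹ := by rw [← mul_assoc, Units.inv_mul, one_mul]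
    _ = c • (↑t⁻¹ * x) := by
      rw [h, mul_smul_comm, smul_mul_assoc, mul_assoc, mul_assoc, Units.mul_inv, mul_one]

end QCommute

section BasisTensor

variable {k M N ι κ : Type*} [CommSemiring k] [AddCommMonoid M] [Module k M]
  [AddCommMonoid N] [Module k N]

theorem Module.Basis.apply_eq_tmul_iff_mem_span_image (b : Basis ι k M) (c : Basis κ k N)
    (f : ι → κ) (Ψ : M →ₗ[k] N ⊗[k] M) (hΨ : ∀ i, Ψ (b i) = c (f i) ⊗ₜ b i) (κ₀ : κ) (x : M) :
    Ψ x = c κ₀ ⊗ₜ x ↔ x ∈ Submodule.span k (b '' (f ⁻¹' {κ₀})) := by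
  set B := c.tensorProduct b
  have hrepr : B.repr ∘ₗ Ψ = Finsupp.lmapDomain k k (fun i => (f i, i)) ∘ₗ b.repr.toLinearMap := by
    refine b.ext fun i => ?_
    simp [B, hΨ, ← Basis.tensorProduct_apply]
  constructor
  · intro hx
    rw [b.mem_span_image]
    intro i hi
    by_contra hfi
    have hinj : Function.Injective fun i => (f i, i) := fun _ _ h => congr_arg Prod.snd h
    have hcoeff : B.repr (Ψ x) (f i, i) = B.repr (c κ₀ ⊗ₜ x) (f i, i) := by rw [hx]
    rw [← LinearEquiv.coe_coe, ← LinearMap.comp_apply, hrepr, LinearMap.comp_apply,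
      Finsupp.lmapDomain_apply, LinearEquiv.coe_coe, Finsupp.mapDomain_apply hinj] at hcoeff
    simp [B, Ne.symm hfi] at hcoeff
    exact (Finsupp.mem_support_iff.mp hi) hcoeff
  · intro hx
    induction hx using Submodule.span_induction with
    | mem _ hm =>
      obtain ⟨i, hi, rfl⟩ := hm
      rw [hΨ, show f i = κ₀ from hi]
    | zero => simp
    | add _ _ _ _ h₁ h₂ => rw [map_add, h₁, h₂, tmul_add]
    | smul a _ _ h => rw [map_smul, h, tmul_smul]

end BasisTensor

theorem Algebra.toSubmodule_adjoin_singleton_eq_span_range {k A : Type*} [Field k] [Semiring A]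
    [Algebra k A] {x : A} {v : ℕ → A} {c : ℕ → k} (hc : ∀ r, c r ≠ 0)
    (hv : ∀ r, v r = c r • x ^ r) :
    Subalgebra.toSubmodule (Algebra.adjoin k {x}) = Submodule.span k (Set.range v) := by
  rw [Algebra.adjoin_eq_span, ← Submonoid.powers_eq_closure, Submonoid.coe_powers]
  apply le_antisymm <;> rw [Submodule.span_le] <;> rintro _ ⟨r, rfl⟩
  · rw [SetLike.mem_coe, ← inv_smul_smul₀ (hc r) ((fun n => x ^ n) r), ← hv]
    exact Submodule.smul_mem _ _ (Submodule.subset_span ⟨r, rfl⟩)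
  · rw [hv]
    exact Submodule.smul_mem _ _ (Submodule.subset_span ⟨r, rfl⟩)

section Coaction

variable {k H H₀ : Type*} [CommSemiring k] [Semiring H] [Bialgebra k H] [Semiring H₀]
  [Algebra k H₀]

noncomputable def leftCoaction (π : H →ₐ[k] H₀) : H →ₐ[k] H₀ ⊗[k] H :=
  (Algebra.TensorProduct.map π (AlgHom.id k H)).comp (Bialgebra.comulAlgHom k H)

theorem leftCoaction_apply (π : H →ₐ[k] H₀) (h : H) :
    leftCoaction π h = TensorProduct.map π.toLinearMap LinearMap.id (Coalgebra.comul (R := k) h) :=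
  rfl

theorem leftCoaction_of_comul_eq_tmul (π : H →ₐ[k] H₀) {g : H}
    (hg : Coalgebra.comul (R := k) g = g ⊗ₜ g) : leftCoaction π g = π g ⊗ₜ g := by
  rw [leftCoaction_apply, hg, map_tmul]
  rfl

theorem leftCoaction_of_comul_eq_add (π : H →ₐ[k] H₀) {a n w : H}
    (hn : Coalgebra.comul (R := k) n = a ⊗ₜ n + n ⊗ₜ w) (hπn : π n = 0) :
    leftCoaction π n = π a ⊗ₜ n := by
  rw [leftCoaction_apply, hn, map_add, map_tmul, map_tmul]
  simp [hπn]

theorem leftCoaction_zpow_mul_zpow_mul_pow (π : H →ₐ[k] H₀) {t D : Hˣ} {n w : H}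
    (hgt : ∀ m : ℤ, Coalgebra.comul (R := k) ((t ^ m : Hˣ) : H) =
      ((t ^ m : Hˣ) : H) ⊗ₜ[k] ((t ^ m : Hˣ) : H))
    (hgD : ∀ p : ℤ, Coalgebra.comul (R := k) ((D ^ p : Hˣ) : H) =
      ((D ^ p : Hˣ) : H) ⊗ₜ[k] ((D ^ p : Hˣ) : H))
    (hn : Coalgebra.comul (R := k) n = (t : H) ⊗ₜ n + n ⊗ₜ w) (hπn : π n = 0)
    (p m : ℤ) (r : ℕ) :
    leftCoaction π (((D ^ p : Hˣ) : H) * ((t ^ m : Hˣ) : H) * n ^ r) =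
      π (((D ^ p : Hˣ) : H) * ((t ^ (m + r) : Hˣ) : H)) ⊗ₜ
        (((D ^ p : Hˣ) : H) * ((t ^ m : Hˣ) : H) * n ^ r) := by
  rw [map_mul, map_mul, map_pow, leftCoaction_of_comul_eq_tmul π (hgD p),
    leftCoaction_of_comul_eq_tmul π (hgt m), leftCoaction_of_comul_eq_add π hn hπn,
    Algebra.TensorProduct.tmul_pow, Algebra.TensorProduct.tmul_mul_tmul,
    Algebra.TensorProduct.tmul_mul_tmul, zpow_add, zpow_natCast, Units.val_mul,
    Units.val_pow_eq_pow_val, ← map_pow, ← map_mul, ← map_mul, mul_assoc]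

end Coaction

theorem coinvariants_generated_by_beta_general {k H H₀ : Type*} [Field k]
    [Ring H] [Bialgebra k H] [Ring H₀] [Algebra k H₀]
    (q : k) (hq : q ≠ 0)
    (t Dt : Hˣ) (n : H)
    (htn : (t : H) * n = q⁻¹ • (n * (t : H)))
    (hgt : ∀ m : ℤ, Coalgebra.comul (R := k) ((t ^ m : Hˣ) : H) =
      ((t ^ m : Hˣ) : H) ⊗ₜ[k] ((t ^ m : Hˣ) : H))
    (hgD : ∀ p : ℤ, Coalgebra.comul (R := k) ((Dt ^ p : Hˣ) : H) =
      ((Dt ^ p : Hˣ) : H) ⊗ₜ[k] ((Dt ^ p : Hˣ) : H))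
    (hΔn : Coalgebra.comul (R := k) n =
      (t : H) ⊗ₜ[k] n + n ⊗ₜ[k] (((t⁻¹ : Hˣ) : H) * (Dt : H)))
    (bH : Module.Basis (ℤ × ℤ × ℕ) k H)
    (hbH : ∀ p m : ℤ, ∀ r : ℕ,
      bH (p, m, r) = ((Dt ^ p : Hˣ) : H) * ((t ^ m : Hˣ) : H) * n ^ r)
    (π : H →ₐ[k] H₀) (hπn : π n = 0)
    (bH₀ : Module.Basis (ℤ × ℤ) k H₀)
    (hbH₀ : ∀ p m : ℤ, bH₀ (p, m) = π (((Dt ^ p : Hˣ) : H) * ((t ^ m : Hˣ) : H))) :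
    (TensorProduct.map π.toLinearMap LinearMap.id)
        (Coalgebra.comul (R := k) (((t⁻¹ : Hˣ) : H) * n)) =
      (1 : H₀) ⊗ₜ[k] (((t⁻¹ : Hˣ) : H) * n) ∧
    ∀ h : H,
      (TensorProduct.map π.toLinearMap LinearMap.id) (Coalgebra.comul (R := k) h) =
          (1 : H₀) ⊗ₜ[k] h ↔
        h ∈ Algebra.adjoin k {((t⁻¹ : Hˣ) : H) * n} := by
  set β : H := ((t⁻¹ : Hˣ) : H) * n
  set f : ℤ × ℤ × ℕ → ℤ × ℤ := fun i => (i.1, i.2.1 + i.2.2)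
  have hρ (i : ℤ × ℤ × ℕ) : leftCoaction π (bH i) = bH₀ (f i) ⊗ₜ bH i := by
    rw [hbH, hbH₀, leftCoaction_zpow_mul_zpow_mul_pow π hgt hgD hΔn hπn]
  have hone : bH₀ (0, 0) = 1 := by simp [hbH₀]
  have hfiber : f ⁻¹' {(0, 0)} = Set.range fun r : ℕ => ((0 : ℤ), -(r : ℤ), r) := by
    ext ⟨p, m, r⟩
    simp only [f, Set.mem_preimage, Set.mem_singleton_iff, Set.mem_range, Prod.mk.injEq]
    constructor
    · rintro ⟨rfl, hm⟩
      exact ⟨r, rfl, by omega, rfl⟩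
    · rintro ⟨r, rfl, rfl, rfl⟩
      simp
  have hβpow (r : ℕ) : bH (0, -(r : ℤ), r) = q ^ r.choose 2 • β ^ r := by
    rw [mul_pow_of_mul_eq_smul (Units.mul_inv_eq_smul_of_mul_eq_smul t htn), smul_smul,
      inv_pow, mul_inv_cancel₀ (pow_ne_zero _ hq), one_smul, hbH]
    simp
  have key (h : H) : leftCoaction π h = 1 ⊗ₜ h ↔ h ∈ Algebra.adjoin k {β} := by
    rw [← hone]
    refine (bH.apply_eq_tmul_iff_mem_span_image bH₀ f (leftCoaction π).toLinearMap hρ _ h).trans ?_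
    rw [hfiber, ← Set.range_comp, ← Algebra.toSubmodule_adjoin_singleton_eq_span_range
        (v := bH ∘ fun r : ℕ => ((0 : ℤ), -(r : ℤ), r)) (fun r => pow_ne_zero _ hq) hβpow]
    rfl
  exact ⟨(key _).2 (Algebra.self_mem_adjoin_singleton k _), key⟩

/-- In the Hopf algebra `H = Õ_q(P)` (generated by the invertible group-like elements
`t, D̃` and the element `n` with `Δ(n) = t ⊗ n + n ⊗ t⁻¹D̃`, with basis `{D̃^p t^m n^r}`),
the element `β := t⁻¹ n` is left `H₀`-coinvariant, where `H₀ = H/(n)` (whose images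
`π(D̃^p t^m)` form a basis), and the subalgebra of left `H₀`-coinvariants of `H`
(for the left coaction `ρ(h) = π(h_(1)) ⊗ h_(2)`) is generated by `β`. -/
theorem coinvariants_generated_by_beta {k H H₀ : Type*} [Field k]
    [Ring H] [Bialgebra k H] [Ring H₀] [Algebra k H₀]
    (q : k) (hq : q ≠ 0)
    (t Dt : Hˣ) (n : H)
    (htn : (t : H) * n = q⁻¹ • (n * (t : H)))
    (hnD : n * (Dt : H) = (q ^ 2) • ((Dt : H) * n))
    (hgt : ∀ m : ℤ, Coalgebra.comul (R := k) ((t ^ m : Hˣ) : H) =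
      ((t ^ m : Hˣ) : H) ⊗ₜ[k] ((t ^ m : Hˣ) : H))
    (hgD : ∀ p : ℤ, Coalgebra.comul (R := k) ((Dt ^ p : Hˣ) : H) =
      ((Dt ^ p : Hˣ) : H) ⊗ₜ[k] ((Dt ^ p : Hˣ) : H))
    (hΔn : Coalgebra.comul (R := k) n =
      (t : H) ⊗ₜ[k] n + n ⊗ₜ[k] (((t⁻¹ : Hˣ) : H) * (Dt : H)))
    (bH : Module.Basis (ℤ × ℤ × ℕ) k H)
    (hbH : ∀ p m : ℤ, ∀ r : ℕ,
      bH (p, m, r) = ((Dt ^ p : Hˣ) : H) * ((t ^ m : Hˣ) : H) * n ^ r)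
    (π : H →ₐ[k] H₀) (hπn : π n = 0)
    (bH₀ : Module.Basis (ℤ × ℤ) k H₀)
    (hbH₀ : ∀ p m : ℤ, bH₀ (p, m) = π (((Dt ^ p : Hˣ) : H) * ((t ^ m : Hˣ) : H))) :
    (TensorProduct.map π.toLinearMap LinearMap.id)
        (Coalgebra.comul (R := k) (((t⁻¹ : Hˣ) : H) * n)) =
      (1 : H₀) ⊗ₜ[k] (((t⁻¹ : Hˣ) : H) * n) ∧
    ∀ h : H,
      (TensorProduct.map π.toLinearMap LinearMap.id) (Coalgebra.comul (R := k) h) =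
          (1 : H₀) ⊗ₜ[k] h ↔
        h ∈ Algebra.adjoin k {((t⁻¹ : Hˣ) : H) * n} :=
  coinvariants_generated_by_beta_general q hq t Dt n htn hgt hgD hΔn bH hbH π hπn bH₀ hbH₀
end

section
/- Let H be a Hopf algebra, J a Hopf ideal, H_0 = H/J with projection π, and let K = {k ∈ H : π(k_(1)) ⊗ k_(2) = 1 ⊗ k} be the left H_0-coinvariants. Then K is stable under the right adjoint action k ◁ h = S(h_(1)) k h_(2) of H. -/
/-! In the convolution algebra of linear maps `H → H₀ ⊗ H`, the coaction `T = (π ⊗ id) ∘ Δ`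
factors as `P * Q` with `P h = π h ⊗ 1` and `Q h = 1 ⊗ h`. As `T` and `Q` are algebra maps,
`T ∘ S` is a left convolution inverse of `T` and `Q ∘ S` a right one of `Q`, so
`(T ∘ S) * P = (T ∘ S) * T * (Q ∘ S) = Q ∘ S`. For a coinvariant `y` we have
`T (y h) = (1 ⊗ y) T h`, i.e. `T ∘ L_y = P * (Q ∘ L_y)`, and the adjoint action
`ad_y = S * L_y` satisfies `T ∘ ad_y = (T ∘ S) * P * (Q ∘ L_y) = (Q ∘ S) * (Q ∘ L_y) = Q ∘ ad_y`. -/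

open TensorProduct

variable (k H H₀ : Type*) [Field k] [Ring H] [HopfAlgebra k H] [Ring H₀] [HopfAlgebra k H₀]

/-- The right adjoint action `y ◁ h := S(h_(1)) y h_(2)` of `H` on itself. -/
noncomputable def adAct (y h : H) : H :=
  TensorProduct.lift
    (LinearMap.mk₂ k (fun a b => (HopfAlgebra.antipode (R := k) a) * y * b)
      (fun a a' b => by simp [map_add, add_mul])
      (fun c a b => by simp [map_smul, smul_mul_assoc])
      (fun a b b' => by simp [mul_add])
      (fun c a b => by simp [mul_smul_comm]))
    (Coalgebra.comul (R := k) h)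

open WithConv

namespace LinearMap

variable {R C A B : Type*} [CommSemiring R] [AddCommMonoid C] [Module R C] [Coalgebra R C]
  [Semiring A] [Algebra R A] [Semiring B] [Algebra R B]

theorem map_comp_comul_eq_convMul (f : C →ₗ[R] A) (g : C →ₗ[R] B) :
    toConv (map f g ∘ₗ Coalgebra.comul) =
      toConv (Algebra.TensorProduct.includeLeft.toLinearMap ∘ₗ f) *
        toConv (Algebra.TensorProduct.includeRight.toLinearMap ∘ₗ g) := by
  have : map f g = mul' R (A ⊗[R] B) ∘ₗ
      map (Algebra.TensorProduct.includeLeft.toLinearMap ∘ₗ f)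
        (Algebra.TensorProduct.includeRight.toLinearMap ∘ₗ g) :=
    TensorProduct.ext' fun a b => by simp
  rw [this, convMul_def]
  rfl

theorem toConv_algHom_comp_convMul (h : A →ₐ[R] B) (f g : WithConv (C →ₗ[R] A)) :
    toConv (h.toLinearMap ∘ₗ (f * g).ofConv) =
      toConv (h.toLinearMap ∘ₗ f.ofConv) * toConv (h.toLinearMap ∘ₗ g.ofConv) :=
  congrArg toConv (algHom_comp_convMul_distrib h f g)

theorem toConv_algHom_comp_one (h : A →ₐ[R] B) :
    toConv (h.toLinearMap ∘ₗ (1 : WithConv (C →ₗ[R] A)).ofConv) = 1 := by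
  ext; simp

end LinearMap

section HopfAlgebra

variable {R A B : Type*} [CommSemiring R] [Semiring A] [HopfAlgebra R A] [Semiring B] [Algebra R B]

namespace AlgHom

theorem comp_antipode_convMul_self (f : A →ₐ[R] B) :
    toConv (f.toLinearMap ∘ₗ HopfAlgebra.antipode R) * toConv f.toLinearMap = 1 := by
  rw [← LinearMap.toConv_algHom_comp_one f, ← LinearMap.antipode_mul_id,
    LinearMap.toConv_algHom_comp_convMul]
  rfl

theorem self_convMul_comp_antipode (f : A →ₐ[R] B) :
    toConv f.toLinearMap * toConv (f.toLinearMap ∘ₗ HopfAlgebra.antipode R) = 1 := by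
  rw [← LinearMap.toConv_algHom_comp_one f, ← LinearMap.id_mul_antipode,
    LinearMap.toConv_algHom_comp_convMul]
  rfl

end AlgHom

variable (R) in
noncomputable def adjointAction (y : A) : A →ₗ[R] A :=
  (toConv (HopfAlgebra.antipode R) * toConv (LinearMap.mulLeft R y)).ofConv

noncomputable def coaction (π : A →ₐ[R] B) : A →ₐ[R] B ⊗[R] A :=
  (Algebra.TensorProduct.map π (AlgHom.id R A)).comp (Bialgebra.comulAlgHom R A)

theorem toLinearMap_coaction (π : A →ₐ[R] B) :
    (coaction π).toLinearMap = map π.toLinearMap LinearMap.id ∘ₗ Coalgebra.comul :=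
  rfl

theorem coaction_comp_mulLeft (π : A →ₐ[R] B) {y : A} (hy : coaction π y = 1 ⊗ₜ y) :
    (coaction π).toLinearMap ∘ₗ LinearMap.mulLeft R y =
      map π.toLinearMap (LinearMap.mulLeft R y) ∘ₗ Coalgebra.comul := by
  have hmul : LinearMap.mulLeft R ((1 : B) ⊗ₜ[R] y) ∘ₗ map π.toLinearMap LinearMap.id =
      map π.toLinearMap (LinearMap.mulLeft R y) :=
    TensorProduct.ext' fun a b => by simp
  rw [← hmul, LinearMap.comp_assoc, ← toLinearMap_coaction, ← hy]
  exact LinearMap.ext fun h => map_mul (coaction π) y h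

theorem coaction_comp_adjointAction (π : A →ₐ[R] B) {y : A} (hy : coaction π y = 1 ⊗ₜ y) :
    (coaction π).toLinearMap ∘ₗ adjointAction R y =
      Algebra.TensorProduct.includeRight.toLinearMap ∘ₗ adjointAction R y := by
  set T := coaction π
  set Q : A →ₐ[R] B ⊗[R] A := Algebra.TensorProduct.includeRight
  set P : WithConv (A →ₗ[R] B ⊗[R] A) :=
    toConv (Algebra.TensorProduct.includeLeft.toLinearMap ∘ₗ π.toLinearMap)
  have hT : toConv T.toLinearMap = P * toConv Q.toLinearMap := by
    rw [toLinearMap_coaction, LinearMap.map_comp_comul_eq_convMul]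
    rfl
  have hTy : toConv (T.toLinearMap ∘ₗ LinearMap.mulLeft R y) =
      P * toConv (Q.toLinearMap ∘ₗ LinearMap.mulLeft R y) := by
    rw [coaction_comp_mulLeft π hy, LinearMap.map_comp_comul_eq_convMul]
  have hTS : toConv (T.toLinearMap ∘ₗ HopfAlgebra.antipode R) * P =
      toConv (Q.toLinearMap ∘ₗ HopfAlgebra.antipode R) := calc
    _ = toConv (T.toLinearMap ∘ₗ HopfAlgebra.antipode R) * P *
          (toConv Q.toLinearMap * toConv (Q.toLinearMap ∘ₗ HopfAlgebra.antipode R)) := by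
      rw [Q.self_convMul_comp_antipode, mul_one]
    _ = toConv (T.toLinearMap ∘ₗ HopfAlgebra.antipode R) * toConv T.toLinearMap *
          toConv (Q.toLinearMap ∘ₗ HopfAlgebra.antipode R) := by
      simp only [hT, mul_assoc]
    _ = _ := by rw [T.comp_antipode_convMul_self, one_mul]
  apply toConv_injective
  rw [adjointAction, LinearMap.toConv_algHom_comp_convMul, LinearMap.toConv_algHom_comp_convMul,
    hTy, ← mul_assoc, hTS]

end HopfAlgebra

theorem adAct_eq_adjointAction (y g : H) : adAct k H y g = adjointAction k y g := by
  rw [adAct, adjointAction, (Coalgebra.Repr.arbitrary k g).convMul_apply,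
    ← (Coalgebra.Repr.arbitrary k g).eq]
  simp [mul_assoc]

theorem coinvariants_adjoint_stable
    (π : H →ₐ[k] H₀) :
    ∀ y : H,
      (TensorProduct.map π.toLinearMap LinearMap.id) (Coalgebra.comul (R := k) y) =
        (1 : H₀) ⊗ₜ[k] y →
      ∀ g : H,
        (TensorProduct.map π.toLinearMap LinearMap.id)
            (Coalgebra.comul (R := k) (adAct k H y g)) =
          (1 : H₀) ⊗ₜ[k] (adAct k H y g) := by
  intro y hy g
  rw [adAct_eq_adjointAction]
  exact LinearMap.congr_fun (coaction_comp_adjointAction π hy) g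
end

section
/- Let B = A^{co H} ⊆ A be an H-Galois extension with translation map τ. The Miyashita–Ulbrich action x ◁ h := h^<1> x h^<2> is well defined on the centralizer Z_A(B) = {x ∈ A : xb = bx for all b ∈ B} and makes Z_A(B) a right H-module. -/
open TensorProduct

variable (k H A : Type*) [Field k] [Ring H] [HopfAlgebra k H] [Ring A] [Algebra k A]

/-- The bilinear "sandwich" map `(u, v) ↦ u * x * v`. -/
noncomputable def sandwich (x : A) : A →ₗ[k] A →ₗ[k] A :=
  LinearMap.mk₂ k (fun u v => u * x * v)
    (fun u u' v => by simp [add_mul])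
    (fun c u v => by simp [smul_mul_assoc])
    (fun u v v' => by simp [mul_add])
    (fun c u v => by simp [mul_smul_comm])

/-- Given a lift `τ : H → A ⊗ A` of the translation map, the Miyashita–Ulbrich operator
`T_τ(h)(x) = h^<1> x h^<2>`. -/
noncomputable def Tact (τ : H →ₗ[k] A ⊗[k] A) (h : H) (x : A) : A :=
  TensorProduct.lift (sandwich k A x) (τ h)

/-- The canonical map at the level of `A ⊗[k] A`: `a' ⊗ a ↦ a' a_(0) ⊗ a_(1)`. -/
noncomputable def chi0 (δ : A →ₐ[k] A ⊗[k] H) : A ⊗[k] A →ₗ[k] A ⊗[k] H :=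
  (LinearMap.mul' k (A ⊗[k] H)) ∘ₗ
    (TensorProduct.map (Algebra.TensorProduct.includeLeft : A →ₐ[k] A ⊗[k] H).toLinearMap
      δ.toLinearMap)

/-- The submodule of `B`-balanced relations in `A ⊗[k] A`, i.e. the kernel of the projection
`A ⊗[k] A → A ⊗_B A`, where `B = A^{co H}`. -/
noncomputable def balanced (δ : A →ₐ[k] A ⊗[k] H) : Submodule k (A ⊗[k] A) :=
  Submodule.span k
    {w : A ⊗[k] A | ∃ a c b : A, δ b = b ⊗ₜ[k] 1 ∧ w = (a * b) ⊗ₜ[k] c - a ⊗ₜ[k] (b * c)}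

/-!
Write `x ◁ w` for the image of `w ∈ A ⊗ A` under `u ⊗ v ↦ u x v`, so that `x ◁ h = x ◁ τ h`.
For `x` centralizing `B` this map kills the `B`-balanced relations, so by injectivity of the
canonical map `x ◁ w` depends only on `χ₀ w`. Letting `A ⊗ A` act on itself by
`(u ⊗ v) • w = (u ⊗ 1) w (1 ⊗ v)`, we have `(x ◁ w) ◁ w' = x ◁ (w' • w)` and
`χ₀ (w' • τ h) = (1 ⊗ h) χ₀ w'`. Taking `w' = τ g'` gives `(x ◁ g) ◁ g' = x ◁ (g g')`; taking
`w' = 1 ⊗ b` and `b ⊗ 1`, which have the same image under `χ₀` for `b ∈ B`, shows that `x ◁ h`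
commutes with `b`.
-/

open Algebra.TensorProduct

section

variable {k H A}

noncomputable def sandwichTensor : A ⊗[k] A →ₗ[k] A ⊗[k] A →ₗ[k] A ⊗[k] A :=
  TensorProduct.lift (LinearMap.mk₂ k
    (fun u v => LinearMap.mulLeft k (u ⊗ₜ[k] (1 : A)) ∘ₗ LinearMap.mulRight k ((1 : A) ⊗ₜ[k] v))
    (fun u u' v => by ext w; simp [add_tmul, add_mul])
    (fun c u v => by ext w; simp [smul_tmul'])
    (fun u v v' => by ext w; simp [tmul_add, mul_add])
    (fun c u v => by ext w; simp [tmul_smul]))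

lemma sandwichTensor_tmul (u v : A) (w : A ⊗[k] A) :
    sandwichTensor (u ⊗ₜ[k] v) w = (u ⊗ₜ[k] (1 : A)) * (w * ((1 : A) ⊗ₜ[k] v)) := rfl

lemma lift_sandwich_tmul (x u v : A) :
    TensorProduct.lift (sandwich k A x) (u ⊗ₜ[k] v) = u * x * v := rfl

lemma lift_sandwich_sandwichTensor (x : A) (w' w : A ⊗[k] A) :
    TensorProduct.lift (sandwich k A x) (sandwichTensor w' w) =
      TensorProduct.lift (sandwich k A (TensorProduct.lift (sandwich k A x) w)) w' := by
  induction w' using TensorProduct.induction_on with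
  | zero => simp
  | add w₁ w₂ ih₁ ih₂ => simp only [map_add, LinearMap.add_apply, ih₁, ih₂]
  | tmul u v =>
    induction w using TensorProduct.induction_on with
    | zero =>
      rw [sandwichTensor_tmul, zero_mul, mul_zero, map_zero, lift_sandwich_tmul,
        mul_zero, zero_mul]
    | add w₁ w₂ ih₁ ih₂ =>
      simp only [map_add, ih₁, ih₂, lift_sandwich_tmul, mul_add, add_mul]
    | tmul p q =>
      rw [sandwichTensor_tmul, tmul_mul_tmul, tmul_mul_tmul, one_mul, mul_one,
        lift_sandwich_tmul, lift_sandwich_tmul, lift_sandwich_tmul]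
      simp only [mul_assoc]

lemma chi0_tmul (δ : A →ₐ[k] A ⊗[k] H) (u v : A) :
    chi0 k H A δ (u ⊗ₜ[k] v) = (u ⊗ₜ[k] (1 : H)) * δ v := by
  simp [chi0, LinearMap.mul'_apply]

lemma chi0_sandwichTensor_tmul (δ : A →ₐ[k] A ⊗[k] H) (u v : A) (w : A ⊗[k] A) :
    chi0 k H A δ (sandwichTensor (u ⊗ₜ[k] v) w) =
      (u ⊗ₜ[k] (1 : H)) * chi0 k H A δ w * δ v := by
  induction w using TensorProduct.induction_on with
  | zero => simp [sandwichTensor_tmul]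
  | add w₁ w₂ ih₁ ih₂ => simp only [map_add, ih₁, ih₂, mul_add, add_mul]
  | tmul p q =>
    simp only [sandwichTensor_tmul, tmul_mul_tmul, one_mul, mul_one, chi0_tmul, map_mul,
      ← mul_assoc]

/-- `1 ⊗ g` commutes with `A ⊗ 1`. -/
lemma chi0_sandwichTensor_of_chi0_eq (δ : A →ₐ[k] A ⊗[k] H) {g : H} {w : A ⊗[k] A}
    (hw : chi0 k H A δ w = 1 ⊗ₜ[k] g) (w' : A ⊗[k] A) :
    chi0 k H A δ (sandwichTensor w' w) = ((1 : A) ⊗ₜ[k] g) * chi0 k H A δ w' := by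
  induction w' using TensorProduct.induction_on with
  | zero => simp
  | add w₁ w₂ ih₁ ih₂ => simp only [map_add, LinearMap.add_apply, ih₁, ih₂, mul_add]
  | tmul u v =>
    rw [chi0_sandwichTensor_tmul, hw, chi0_tmul, tmul_mul_tmul, ← mul_assoc, tmul_mul_tmul,
      one_mul, mul_one, one_mul, mul_one]

lemma chi0_tmul_one_of_coinvariant (δ : A →ₐ[k] A ⊗[k] H) {b : A} (hb : δ b = b ⊗ₜ[k] 1) :
    chi0 k H A δ ((1 : A) ⊗ₜ[k] b) = chi0 k H A δ (b ⊗ₜ[k] (1 : A)) := by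
  rw [chi0_tmul, chi0_tmul, hb, map_one, ← one_def, one_mul, mul_one]

lemma lift_sandwich_eq_zero_of_mem_balanced {δ : A →ₐ[k] A ⊗[k] H} {x : A}
    (hx : ∀ b : A, δ b = b ⊗ₜ[k] 1 → x * b = b * x) {w : A ⊗[k] A}
    (hw : w ∈ balanced k H A δ) :
    TensorProduct.lift (sandwich k A x) w = 0 := by
  induction hw using Submodule.span_induction with
  | mem w hw =>
    obtain ⟨a, c, b, hb, rfl⟩ := hw
    rw [map_sub, lift_sandwich_tmul, lift_sandwich_tmul, sub_eq_zero, mul_assoc a b x,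
      ← hx b hb, mul_assoc, mul_assoc, mul_assoc]
  | zero => simp
  | add u v _ _ ihu ihv => simp [ihu, ihv]
  | smul c u _ ihu => simp [ihu]

lemma lift_sandwich_eq_of_chi0_eq {δ : A →ₐ[k] A ⊗[k] H}
    (hinj : ∀ u : A ⊗[k] A, chi0 k H A δ u = 0 → u ∈ balanced k H A δ) {x : A}
    (hx : ∀ b : A, δ b = b ⊗ₜ[k] 1 → x * b = b * x) {u v : A ⊗[k] A}
    (h : chi0 k H A δ u = chi0 k H A δ v) :
    TensorProduct.lift (sandwich k A x) u = TensorProduct.lift (sandwich k A x) v := by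
  have hbal := hinj (u - v) (by rw [map_sub, h, sub_self])
  rw [← sub_eq_zero, ← map_sub]
  exact lift_sandwich_eq_zero_of_mem_balanced hx hbal

lemma lift_sandwich_Tact_eq_of_chi0_eq {δ : A →ₐ[k] A ⊗[k] H}
    (hinj : ∀ u : A ⊗[k] A, chi0 k H A δ u = 0 → u ∈ balanced k H A δ)
    {τ : H →ₗ[k] A ⊗[k] A} (hτ : ∀ h : H, chi0 k H A δ (τ h) = 1 ⊗ₜ[k] h) {x : A}
    (hx : ∀ b : A, δ b = b ⊗ₜ[k] 1 → x * b = b * x) (h : H) {u v : A ⊗[k] A}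
    (huv : chi0 k H A δ u = chi0 k H A δ v) :
    TensorProduct.lift (sandwich k A (Tact k H A τ h x)) u =
      TensorProduct.lift (sandwich k A (Tact k H A τ h x)) v := by
  simp only [Tact, ← lift_sandwich_sandwichTensor]
  refine lift_sandwich_eq_of_chi0_eq hinj hx ?_
  rw [chi0_sandwichTensor_of_chi0_eq δ (hτ h), chi0_sandwichTensor_of_chi0_eq δ (hτ h), huv]

end

/-- `τ` lifts the translation map to `A ⊗[k] A`; `hτ` and `hinj` encode surjectivity and
injectivity of the canonical map `A ⊗_B A → A ⊗ H`. -/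
theorem miyashita_ulbrich_action
    (δ : A →ₐ[k] A ⊗[k] H)
    (τ : H →ₗ[k] A ⊗[k] A)
    (hτ : ∀ h : H, chi0 k H A δ (τ h) = 1 ⊗ₜ[k] h)
    (hinj : ∀ u : A ⊗[k] A, chi0 k H A δ u = 0 → u ∈ balanced k H A δ) :
    (∀ τ' : H →ₗ[k] A ⊗[k] A, (∀ h : H, chi0 k H A δ (τ' h) = 1 ⊗ₜ[k] h) →
      ∀ (h : H) (x : A), (∀ b : A, δ b = b ⊗ₜ[k] 1 → x * b = b * x) →
        Tact k H A τ h x = Tact k H A τ' h x) ∧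
    (∀ (h : H) (x : A), (∀ b : A, δ b = b ⊗ₜ[k] 1 → x * b = b * x) →
      ∀ b : A, δ b = b ⊗ₜ[k] 1 → (Tact k H A τ h x) * b = b * (Tact k H A τ h x)) ∧
    (∀ x : A, (∀ b : A, δ b = b ⊗ₜ[k] 1 → x * b = b * x) → Tact k H A τ 1 x = x) ∧
    (∀ (g g' : H) (x : A), (∀ b : A, δ b = b ⊗ₜ[k] 1 → x * b = b * x) →
      Tact k H A τ (g * g') x = Tact k H A τ g' (Tact k H A τ g x)) := by
  refine ⟨fun τ' hτ' h x hx => ?_, fun h x hx b hb => ?_, fun x hx => ?_, fun g g' x hx => ?_⟩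
  · exact lift_sandwich_eq_of_chi0_eq hinj hx ((hτ h).trans (hτ' h).symm)
  · have hcomm := lift_sandwich_Tact_eq_of_chi0_eq hinj hτ hx h
      (chi0_tmul_one_of_coinvariant δ hb)
    rwa [lift_sandwich_tmul, lift_sandwich_tmul, one_mul, mul_one] at hcomm
  · have hunit : chi0 k H A δ (τ 1) = chi0 k H A δ ((1 : A) ⊗ₜ[k] (1 : A)) := by
      rw [hτ, chi0_tmul, map_one, ← one_def, one_mul]
    rw [Tact, lift_sandwich_eq_of_chi0_eq hinj hx hunit, lift_sandwich_tmul, one_mul, mul_one]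
  · have hmul : chi0 k H A δ (τ (g * g')) = chi0 k H A δ (sandwichTensor (τ g') (τ g)) := by
      rw [chi0_sandwichTensor_of_chi0_eq δ (hτ g), hτ, hτ, tmul_mul_tmul, one_mul]
    rw [Tact, lift_sandwich_eq_of_chi0_eq hinj hx hmul, lift_sandwich_sandwichTensor]
    rfl
end

section
/- In Õ_q(GL(2))[c^{-1}], the assignment γ₂(D̃^p t^m n^r) = (-1)^p q^p D^p c^m d^r on the basis {D̃^p t^m n^r : m,p ∈ ℤ, r ∈ ℕ} of H = Õ_q(GL(2))/(c) defines a right H-comodule map γ₂: H → A₂, i.e., δ₂ ∘ γ₂ = (γ₂ ⊗ id) ∘ Δ. -/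
/-!
Both sides are `k`-linear in `h`, so it suffices to compare them on the basis vectors
`D̃^p t^m n^r`. The coaction `δ₂` is multiplicative and `Δ` is an algebra map, so both sides
factor as the group-like part `D^p c^m ⊗ D̃^p t^m` times the sums in the formulas for `δ₂(d^r)`
and `Δ(n^r)`. These sums match term by term because `D̃^p t^m · t^j n^(r-j)` is the basis
vector `D̃^p t^(m+j) n^(r-j)`, which `γ₂` sends to `(-q)^p D^p c^m · c^j d^(r-j)`.
-/

open TensorProduct

variable {k A H : Type*} [Field k] [Ring A] [Algebra k A] [Ring H] [Bialgebra k H]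

/-- The cleaving map `γ₂ : H → A₂` defined on the basis `{D̃^p t^m n^r}` of
`H = Õ_q(GL(2))/(c)` by `γ₂(D̃^p t^m n^r) = (-1)^p q^p D^p c^m d^r`. -/
noncomputable def gammaTwo (q : kˣ) (d : A) (cu Du : Aˣ)
    (bH : Module.Basis (ℤ × ℤ × ℕ) k H) : H →ₗ[k] A :=
  bH.constr k fun pmr =>
    ((((-q) ^ pmr.1 : kˣ) : k)) •
      (((Du ^ pmr.1 : Aˣ) : A) * ((cu ^ pmr.2.1 : Aˣ) : A) * d ^ pmr.2.2)

theorem Algebra.TensorProduct.tmul_mul_sum_smul_tmul {R B C ι : Type*} [CommSemiring R]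
    [Semiring B] [Algebra R B] [Semiring C] [Algebra R C] (b : B) (c : C) (s : Finset ι)
    (a : ι → R) (x : ι → B) (y : ι → C) :
    (b ⊗ₜ[R] c) * ∑ i ∈ s, a i • (x i ⊗ₜ[R] y i) = ∑ i ∈ s, a i • ((b * x i) ⊗ₜ[R] (c * y i)) := by
  simp only [Finset.mul_sum, mul_smul_comm, Algebra.TensorProduct.tmul_mul_tmul]

section gammaTwo

variable (q : kˣ) (d : A) (cu Du : Aˣ) (bH : Module.Basis (ℤ × ℤ × ℕ) k H)

theorem gammaTwo_basis (p m : ℤ) (r : ℕ) :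
    gammaTwo q d cu Du bH (bH (p, m, r)) =
      (((-q) ^ p : kˣ) : k) • (((Du ^ p : Aˣ) : A) * ((cu ^ m : Aˣ) : A) * d ^ r) :=
  bH.constr_basis k _ _

theorem gammaTwo_mul_zpow_mul_pow {t Dt : Hˣ} {n : H}
    (hbH : ∀ (p m : ℤ) (r : ℕ),
      bH (p, m, r) = ((Dt ^ p : Hˣ) : H) * ((t ^ m : Hˣ) : H) * n ^ r)
    (p m : ℤ) (j s : ℕ) :
    gammaTwo q d cu Du bH
        (((Dt ^ p : Hˣ) : H) * ((t ^ m : Hˣ) : H) * (((t ^ j : Hˣ) : H) * n ^ s)) =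
      (((-q) ^ p : kˣ) : k) •
        (((Du ^ p : Aˣ) : A) * ((cu ^ m : Aˣ) : A) * (((cu ^ j : Aˣ) : A) * d ^ s)) := by
  have hbasis : ((Dt ^ p : Hˣ) : H) * ((t ^ m : Hˣ) : H) * (((t ^ j : Hˣ) : H) * n ^ s) =
      bH (p, m + j, s) := by
    rw [hbH, zpow_add, zpow_natCast, Units.val_mul, mul_assoc, mul_assoc, mul_assoc]
  rw [hbasis, gammaTwo_basis, zpow_add, zpow_natCast, Units.val_mul, mul_assoc, mul_assoc,
    mul_assoc]

end gammaTwo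

/-- In `A₂ = Õ_q(GL(2))[c⁻¹]`, the assignment `γ₂(D̃^p t^m n^r) = (-1)^p q^p D^p c^m d^r`
on the basis `{D̃^p t^m n^r : m,p ∈ ℤ, r ∈ ℕ}` of `H = Õ_q(GL(2))/(c)` defines a right
`H`-comodule map `γ₂ : H → A₂`, i.e. `δ₂ ∘ γ₂ = (γ₂ ⊗ id) ∘ Δ`. -/
theorem gammaTwo_comodule_map (q : kˣ)
    (d : A) (cu Du : Aˣ) (t Dt : Hˣ) (n : H)
    (bH : Module.Basis (ℤ × ℤ × ℕ) k H)
    (hbH : ∀ (p m : ℤ) (r : ℕ),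
      bH (p, m, r) = ((Dt ^ p : Hˣ) : H) * ((t ^ m : Hˣ) : H) * n ^ r)
    -- group-like generators and the comultiplication of the powers of `n`
    (hgt : ∀ m : ℤ, Coalgebra.comul (R := k) ((t ^ m : Hˣ) : H) =
      ((t ^ m : Hˣ) : H) ⊗ₜ[k] ((t ^ m : Hˣ) : H))
    (hgD : ∀ p : ℤ, Coalgebra.comul (R := k) ((Dt ^ p : Hˣ) : H) =
      ((Dt ^ p : Hˣ) : H) ⊗ₜ[k] ((Dt ^ p : Hˣ) : H))
    (hΔnr : ∀ r : ℕ, Coalgebra.comul (R := k) (n ^ r) =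
      ∑ j ∈ Finset.range (r + 1),
        ((r.choose j : k) * ((q ^ (j * (r - j)) : kˣ) : k)) •
          ((((t ^ j : Hˣ) : H) * n ^ (r - j)) ⊗ₜ[k]
            (((Dt ^ (r - j) : Hˣ) : H) * ((t ^ ((j : ℤ) - (r : ℤ)) : Hˣ) : H) * n ^ j)))
    -- the coaction on `A₂`
    (δ : A →ₐ[k] A ⊗[k] H)
    (hδc : ∀ m : ℤ, δ ((cu ^ m : Aˣ) : A) = ((cu ^ m : Aˣ) : A) ⊗ₜ[k] ((t ^ m : Hˣ) : H))
    (hδD : ∀ p : ℤ, δ ((Du ^ p : Aˣ) : A) = ((Du ^ p : Aˣ) : A) ⊗ₜ[k] ((Dt ^ p : Hˣ) : H))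
    (hδdr : ∀ r : ℕ, δ (d ^ r) =
      ∑ j ∈ Finset.range (r + 1),
        ((r.choose j : k) * ((q ^ (j * (r - j)) : kˣ) : k)) •
          ((((cu ^ j : Aˣ) : A) * d ^ (r - j)) ⊗ₜ[k]
            (((Dt ^ (r - j) : Hˣ) : H) * ((t ^ ((j : ℤ) - (r : ℤ)) : Hˣ) : H) * n ^ j))) :
    ∀ h : H, δ (gammaTwo q d cu Du bH h) =
      (TensorProduct.map (gammaTwo q d cu Du bH) LinearMap.id)
        (Coalgebra.comul (R := k) h) := by
  suffices hmaps : δ.toLinearMap ∘ₗ gammaTwo q d cu Du bH =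
      TensorProduct.map (gammaTwo q d cu Du bH) LinearMap.id ∘ₗ Coalgebra.comul (R := k) from
    LinearMap.congr_fun hmaps
  refine bH.ext fun ⟨p, m, r⟩ => ?_
  simp only [LinearMap.comp_apply, AlgHom.toLinearMap_apply]
  rw [gammaTwo_basis, map_smul, map_mul, map_mul, hδD, hδc, hδdr,
    Algebra.TensorProduct.tmul_mul_tmul, Algebra.TensorProduct.tmul_mul_sum_smul_tmul,
    hbH, Bialgebra.comul_mul, Bialgebra.comul_mul, hgD, hgt, hΔnr,
    Algebra.TensorProduct.tmul_mul_tmul, Algebra.TensorProduct.tmul_mul_sum_smul_tmul,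
    Finset.smul_sum, map_sum]
  refine Finset.sum_congr rfl fun j _ => ?_
  rw [map_smul, TensorProduct.map_tmul, gammaTwo_mul_zpow_mul_pow q d cu Du bH hbH,
    LinearMap.id_apply, ← TensorProduct.smul_tmul', smul_comm]
end
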